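/- arXiv:quant-ph/0205163 — 2 statements merged into one kernel-verified Lean document; each statement's English description precedes it below -/
import Mathlib

section
/- Let (Σ, L, ξ) be a state property system with Cartan map κ, and consider the closure space (Σ, κ(L)). For a ∈ L: a is a classical property if and only if κ(a) is clopen in (Σ, κ(L)). -/
/-- A state property system `(Σ, L, ξ)`: a set of states `S`, a complete lattice `L`
(bottom `⊥ = 0`, top `⊤ = I`) and a map `ξ` sending each state to the set of properties
actual in it, such that `0` is never actual, actual properties are closed under arbitrary
infima (of arbitrary families, in particular `⊤ = sInf ∅` is always actual), and
`a ≤ b ↔ ∀ r, a ∈ ξ r → b ∈ ξ r`. -/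
structure SPS (S : Type*) (L : Type*) [CompleteLattice L] where
  ξ : S → Set L
  bot_not_mem : ∀ p, ⊥ ∉ ξ p
  sInf_mem : ∀ p, ∀ A ⊆ ξ p, sInf A ∈ ξ p
  le_iff : ∀ a b : L, a ≤ b ↔ ∀ r, a ∈ ξ r → b ∈ ξ r

/-- The Cartan map `κ : L → P(Σ)`, `κ a = {p | a ∈ ξ p}`. -/
def SPS.cartan {S L : Type*} [CompleteLattice L] (P : SPS S L) (a : L) : Set S :=
  {p | a ∈ P.ξ p}

/-- `a` and `b` are separated by a super selection rule. -/
def SPS.ssr {S L : Type*} [CompleteLattice L] (P : SPS S L) (a b : L) : Prop :=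
  ∀ p, a ⊔ b ∈ P.ξ p → a ∈ P.ξ p ∨ b ∈ P.ξ p

/-- `a` is a classical property: it has a complement `c` with `a ⊔ c = ⊤`, `a ⊓ c = ⊥`
and `a` ssr `c`. -/
def SPS.IsClassical {S L : Type*} [CompleteLattice L] (P : SPS S L) (a : L) : Prop :=
  ∃ c : L, a ⊔ c = ⊤ ∧ a ⊓ c = ⊥ ∧ P.ssr a c

/-- `(X, F)` is a closure space: `∅ ∈ F`, `X ∈ F`, and `F` is closed under arbitrary
nonempty intersections. -/
def IsClosureSpace {X : Type*} (F : Set (Set X)) : Prop :=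
  ∅ ∈ F ∧ Set.univ ∈ F ∧ ∀ G ⊆ F, G.Nonempty → ⋂₀ G ∈ F

/-- In a closure space `(X, F)`, a set is closed iff it is in `F`, open iff its complement
is in `F`, and clopen iff both. -/
def IsClopenIn {X : Type*} (F : Set (Set X)) (A : Set X) : Prop :=
  A ∈ F ∧ Aᶜ ∈ F

/-- A closure space is connected iff its only clopen subsets are `∅` and `X`. -/
def IsConnectedCS {X : Type*} (F : Set (Set X)) : Prop :=
  ∀ A : Set X, IsClopenIn F A → A = ∅ ∨ A = Set.univ

/-- A subset `A` of a closure space `(X, F)` is connected iff the induced subspace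
`(A, {F ∩ A | F ∈ F})` is connected, i.e. the only subsets of `A` that are clopen in the
trace closure space are `∅` and `A`. -/
def IsConnectedSubset {X : Type*} (F : Set (Set X)) (A : Set X) : Prop :=
  ∀ B ⊆ A, (∃ C ∈ F, B = C ∩ A) → (∃ D ∈ F, A \ B = D ∩ A) → B = ∅ ∨ B = A

/-- The connection component of `x`: the union of all connected subsets containing `x`. -/
def component {X : Type*} (F : Set (Set X)) (x : X) : Set X :=
  ⋃₀ {A : Set X | x ∈ A ∧ IsConnectedSubset F A}

/-- The closure operator of a closure space: `cl A` is the intersection of all members of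
`F` containing `A` (the least such member, i.e. the supremum operation of the lattice `F`
applied to unions). -/
def closureOf {X : Type*} (F : Set (Set X)) (A : Set X) : Set X :=
  ⋂₀ {C ∈ F | A ⊆ C}

/-! The Cartan map is an order embedding of `L` into `P(Σ)` sending `⊓` to `∩`, `⊥` to `∅` and
`⊤` to `Σ`, and `a ssr c` says exactly that `κ (a ⊔ c) ⊆ κ a ∪ κ c`. Hence `c` is a classical
complement of `a` iff `κ a` and `κ c` are complementary sets, and such a `c` exists iff the
complement of `κ a` lies in the range of `κ`, i.e. iff `κ a` is open; it is always closed. -/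

namespace SPS

variable {S L : Type*} [CompleteLattice L] (P : SPS S L)

theorem top_mem (p : S) : (⊤ : L) ∈ P.ξ p := by
  simpa using P.sInf_mem p ∅ (Set.empty_subset _)

theorem inf_mem {a b : L} {p : S} (ha : a ∈ P.ξ p) (hb : b ∈ P.ξ p) : a ⊓ b ∈ P.ξ p := by
  simpa [sInf_pair] using P.sInf_mem p {a, b} (Set.insert_subset ha (Set.singleton_subset_iff.2 hb))

theorem cartan_subset_cartan_iff {a b : L} : P.cartan a ⊆ P.cartan b ↔ a ≤ b :=
  (P.le_iff a b).symm

theorem cartan_mono : Monotone P.cartan := fun _ _ h => P.cartan_subset_cartan_iff.2 h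

theorem cartan_injective : Function.Injective P.cartan := fun _ _ h =>
  le_antisymm (P.cartan_subset_cartan_iff.1 h.subset) (P.cartan_subset_cartan_iff.1 h.superset)

theorem cartan_top : P.cartan ⊤ = Set.univ :=
  Set.eq_univ_of_forall P.top_mem

theorem cartan_bot : P.cartan ⊥ = ∅ :=
  Set.eq_empty_of_forall_notMem P.bot_not_mem

theorem cartan_inf (a b : L) : P.cartan (a ⊓ b) = P.cartan a ∩ P.cartan b :=
  Set.Subset.antisymm (Set.subset_inter (P.cartan_mono inf_le_left) (P.cartan_mono inf_le_right))
    fun _ hp => P.inf_mem hp.1 hp.2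

theorem ssr_iff {a b : L} : P.ssr a b ↔ P.cartan (a ⊔ b) ⊆ P.cartan a ∪ P.cartan b :=
  Iff.rfl

theorem disjoint_cartan_iff {a c : L} : Disjoint (P.cartan a) (P.cartan c) ↔ a ⊓ c = ⊥ := by
  rw [Set.disjoint_iff_inter_eq_empty, ← P.cartan_inf, ← P.cartan_bot, P.cartan_injective.eq_iff]

theorem codisjoint_cartan_iff {a c : L} :
    Codisjoint (P.cartan a) (P.cartan c) ↔ a ⊔ c = ⊤ ∧ P.ssr a c := by
  rw [codisjoint_iff, ssr_iff]
  change P.cartan a ∪ P.cartan c = Set.univ ↔ _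
  constructor
  · intro h
    have hsup : P.cartan ⊤ ⊆ P.cartan (a ⊔ c) := by
      rw [cartan_top, ← h]
      exact Set.union_subset (P.cartan_mono le_sup_left) (P.cartan_mono le_sup_right)
    exact ⟨top_unique (P.cartan_subset_cartan_iff.1 hsup), h ▸ Set.subset_univ _⟩
  · rintro ⟨hsup, hssr⟩
    exact Set.eq_univ_of_univ_subset (P.cartan_top ▸ hsup ▸ hssr)

theorem isCompl_cartan_iff {a c : L} :
    IsCompl (P.cartan a) (P.cartan c) ↔ a ⊔ c = ⊤ ∧ a ⊓ c = ⊥ ∧ P.ssr a c := by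
  rw [isCompl_iff, disjoint_cartan_iff, codisjoint_cartan_iff]
  tauto

theorem isClassical_iff_compl_cartan_mem_range {a : L} :
    P.IsClassical a ↔ (P.cartan a)ᶜ ∈ Set.range P.cartan := by
  simp only [IsClassical, Set.mem_range, eq_comm (b := (P.cartan a)ᶜ), ← isCompl_cartan_iff,
    compl_eq_iff_isCompl]

end SPS

/-- For a state property system with Cartan map `κ` and the associated
closure space `(Σ, κ(L))`: a property `a` is classical iff `κ a` is clopen in `(Σ, κ(L))`. -/
theorem stmt_5 {S L : Type*} [CompleteLattice L] (P : SPS S L) (a : L) :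
    P.IsClassical a ↔ IsClopenIn (Set.range P.cartan) (P.cartan a) := by
  rw [P.isClassical_iff_compl_cartan_mem_range, IsClopenIn]
  exact (and_iff_right (Set.mem_range_self a)).symm
end

section
/- Let (Σ, L, ξ) be a state property system with Cartan map κ, let C' = {⋀_i a_i | (a_i)_i a family of classical properties of (Σ, L, ξ)}, and let ξ'(q) = ξ(q) ∩ C' with Cartan map κ'. Then the closure space (Σ, κ'(C')) is weakly zero-dimensional: it has a base consisting of clopen sets, i.e., there is a family B ⊆ κ'(C') of sets clopen in (Σ, κ'(C')) such that every member of κ'(C') is an intersection of members of B; in fact B may be taken to be the family {κ(a) | a a classical property of (Σ, L, ξ)}. -/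
/-! A classical property `a` with complement `c` has `κ c = (κ a)ᶜ`: `a ⊓ c = 0` is never
actual, and since `a ⊔ c = I` is always actual, the super selection rule makes `a` or `c`
actual. So the Cartan images of classical properties are clopen, and as `κ` turns infima into
intersections, every `κ (⋀ᵢ aᵢ)` is the intersection of these clopen sets `κ aᵢ`. -/

namespace SPS

variable {S L : Type*} [CompleteLattice L] (P : SPS S L)

theorem cartan_sInf (T : Set L) : P.cartan (sInf T) = ⋂ b ∈ T, P.cartan b := by
  ext p
  simp only [cartan, Set.mem_ofPred_eq, Set.mem_iInter]
  exact ⟨fun h b hb => (P.le_iff _ b).mp (sInf_le hb) p h, P.sInf_mem p T⟩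

theorem ssr.symm {P : SPS S L} {a b : L} (h : P.ssr a b) : P.ssr b a :=
  fun p hp => (h p (sup_comm b a ▸ hp)).symm

theorem cartan_eq_compl {a c : L} (hsup : a ⊔ c = ⊤) (hinf : a ⊓ c = ⊥) (hssr : P.ssr a c) :
    P.cartan c = (P.cartan a)ᶜ := by
  refine Set.ext fun p => ⟨fun hc ha => ?_, fun ha => ?_⟩
  · have : p ∈ P.cartan (a ⊓ c) := (P.cartan_inf a c).symm ▸ ⟨ha, hc⟩
    simp [hinf, cartan_bot] at this
  · have : p ∈ P.cartan (a ⊔ c) := hsup ▸ P.cartan_top ▸ Set.mem_univ p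
    exact (hssr p this).resolve_left ha

theorem IsClassical.exists_cartan_eq_compl {P : SPS S L} {a : L} (ha : P.IsClassical a) :
    ∃ c, P.IsClassical c ∧ P.cartan c = (P.cartan a)ᶜ := by
  obtain ⟨c, hsup, hinf, hssr⟩ := ha
  exact ⟨c, ⟨a, sup_comm a c ▸ hsup, inf_comm a c ▸ hinf, hssr.symm⟩,
    P.cartan_eq_compl hsup hinf hssr⟩

end SPS

/-- Let `C' = {⋀_i a_i | (a_i) a family of classical properties}`,
`ξ' q = ξ q ∩ C'` with Cartan map `κ' a = {p | a ∈ ξ' p}`.  Then the closure space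
`(Σ, κ'(C'))` is weakly zero-dimensional: it has a base `B` of clopen sets, i.e. a family
`B ⊆ κ'(C')` of sets clopen in `(Σ, κ'(C'))` such that every member of `κ'(C')` is an
intersection of members of `B`; in fact one may take
`B = {κ a | a a classical property of (Σ, L, ξ)}`. -/
theorem stmt_17 {S L : Type*} [CompleteLattice L] (P : SPS S L)
    (C' : Set L)
    (hC' : C' = {a : L | ∃ T : Set L, (∀ b ∈ T, P.IsClassical b) ∧ a = sInf T})
    (ξ' : S → Set L) (hξ' : ∀ q, ξ' q = P.ξ q ∩ C')
    (κ' : L → Set S) (hκ' : ∀ a, κ' a = {p | a ∈ ξ' p}) :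
    ∃ B ⊆ κ' '' C',
      (∀ A ∈ B, IsClopenIn (κ' '' C') A) ∧
      (∀ F ∈ κ' '' C', ∃ G ⊆ B, F = ⋂₀ G) ∧
      B = P.cartan '' {a : L | P.IsClassical a} := by
  have hκ'_eq : ∀ a ∈ C', κ' a = P.cartan a := fun a ha => by
    ext p
    simp [hκ', hξ', SPS.cartan, ha]
  have hclassical_mem : ∀ a, P.IsClassical a → P.cartan a ∈ κ' '' C' := fun a ha =>
    have hmem : a ∈ C' := hC' ▸ ⟨{a}, by simpa using ha, by simp⟩
    ⟨a, hmem, hκ'_eq a hmem⟩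
  refine ⟨_, ?_, ?_, ?_, rfl⟩
  · rintro _ ⟨a, ha, rfl⟩
    exact hclassical_mem a ha
  · rintro _ ⟨a, ha, rfl⟩
    obtain ⟨c, hc, hcompl⟩ := ha.exists_cartan_eq_compl
    exact ⟨hclassical_mem a ha, hcompl ▸ hclassical_mem c hc⟩
  · rintro _ ⟨a, haC, rfl⟩
    obtain ⟨T, hT, rfl⟩ := hC' ▸ haC
    refine ⟨P.cartan '' T, Set.image_mono hT, ?_⟩
    rw [hκ'_eq _ haC, P.cartan_sInf, Set.sInter_image]
end
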